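/- arXiv:1605.03147 — 4 statements merged into one kernel-verified Lean document; each statement's English description precedes it below -/
import Mathlib

section
/- Let G₁ and G₂ be perfect groups such that every central extension of G₁ splits and every central extension of G₂ splits. Then every central extension of G₁ × G₂ splits. -/
/-!
Restrict a central extension `π : E → G₁ × G₂` to the preimages of the two factors: these are
central extensions of `G₁` and `G₂`, so they split, giving lifts `t₁ : G₁ → E` and
`t₂ : G₂ → E`. Each commutator `⁅t₁ a, t₂ b⁆` lies in `ker π`, hence is central, and then
`a ↦ ⁅t₁ a, t₂ b⁆` is a homomorphism from the perfect group `G₁` to the abelian group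
`center E`, hence trivial. So the two lifts commute and `(a, b) ↦ t₁ a * t₂ b` is a splitting.
-/

open Function Subgroup
open scoped commutatorElement

def CentralExtensionsSplit (G : Type) [Group G] : Prop :=
  ∀ (E : Type) [Group E] (π : E →* G), Surjective π →
    π.ker ≤ center E → ∃ s : G →* E, π.comp s = MonoidHom.id G

theorem MonoidHom.eq_one_of_commutator_eq_top {G A : Type*} [Group G] [CommGroup A]
    (hG : commutator G = ⊤) (f : G →* A) : f = 1 := by
  ext x
  exact Abelianization.commutator_subset_ker f (hG ▸ mem_top x)

theorem commutatorElement_mul_left_of_mem_center {E : Type*} [Group E] {a b c : E}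
    (hb : ⁅b, c⁆ ∈ center E) : ⁅a * b, c⁆ = ⁅b, c⁆ * ⁅a, c⁆ := by
  rw [commutatorElement_mul_left_eq_conj_mul, mem_center_iff.mp hb a, mul_inv_cancel_right]

open scoped IsMulCommutative in
theorem MonoidHom.commute_of_commutatorElement_mem_center {G E : Type*} [Group G] [Group E]
    (hG : commutator G = ⊤) (t : G →* E) {x : E} (hx : ∀ a, ⁅t a, x⁆ ∈ center E) (a : G) :
    Commute (t a) x := by
  let φ : G →* center E :=
    { toFun := fun a => ⟨⁅t a, x⁆, hx a⟩
      map_one' := by ext; simp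
      map_mul' := fun a b => by
        ext
        simp only [map_mul, commutatorElement_mul_left_of_mem_center (hx b), MulMemClass.coe_mul]
        exact (mem_center_iff.mp (hx b) _).symm }
  have hφ : φ a = 1 := by rw [eq_one_of_commutator_eq_top hG φ, one_apply]
  exact commutatorElement_eq_one_iff_commute.mp (congrArg Subtype.val hφ)

theorem CentralExtensionsSplit.exists_comp_eq {K G E : Type} [Group K] [Group G] [Group E]
    (hK : CentralExtensionsSplit K) {π : E →* G} (hπ : Surjective π) (hcen : π.ker ≤ center E)
    {f : K →* G} (hf : Injective f) : ∃ t : K →* E, π.comp t = f := by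
  let ρ : f.range.comap π →* K :=
    (MonoidHom.ofInjective hf).symm.toMonoidHom.comp (π.subgroupComap f.range)
  have hρ : Surjective ρ :=
    (MonoidHom.ofInjective hf).symm.surjective.comp (π.subgroupComap_surjective_of_surjective _ hπ)
  have hρcen : ρ.ker ≤ center (f.range.comap π) := by
    intro x hx
    have hx₁ : π.subgroupComap f.range x = 1 :=
      (MonoidHom.ofInjective hf).symm.map_eq_one_iff.mp hx
    have hx₂ : x.1 ∈ π.ker := congrArg Subtype.val hx₁
    exact mem_center_iff.mpr fun y => Subtype.ext (mem_center_iff.mp (hcen hx₂) y)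
  obtain ⟨s, hs⟩ := hK _ ρ hρ hρcen
  refine ⟨(f.range.comap π).subtype.comp s, MonoidHom.ext fun k => ?_⟩
  have hsk : π.subgroupComap f.range (s k) = MonoidHom.ofInjective hf k :=
    (MulEquiv.symm_apply_eq _).mp (DFunLike.congr_fun hs k)
  exact congrArg Subtype.val hsk

theorem stmt_0_general {G₁ G₂ : Type} [Group G₁] [Group G₂]
    (hperf₁ : commutator G₁ = ⊤)
    (hsplit₁ : ∀ (E : Type) [Group E] (π : E →* G₁), Function.Surjective π →
      π.ker ≤ Subgroup.center E → ∃ s : G₁ →* E, π.comp s = MonoidHom.id G₁)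
    (hsplit₂ : ∀ (E : Type) [Group E] (π : E →* G₂), Function.Surjective π →
      π.ker ≤ Subgroup.center E → ∃ s : G₂ →* E, π.comp s = MonoidHom.id G₂) :
    ∀ (E : Type) [Group E] (π : E →* (G₁ × G₂)), Function.Surjective π →
      π.ker ≤ Subgroup.center E →
      ∃ s : (G₁ × G₂) →* E, π.comp s = MonoidHom.id (G₁ × G₂) := by
  intro E _ π hπ hcen
  obtain ⟨t₁, ht₁⟩ := CentralExtensionsSplit.exists_comp_eq hsplit₁ hπ hcen
    (f := MonoidHom.inl G₁ G₂) fun _ _ h => congrArg Prod.fst h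
  obtain ⟨t₂, ht₂⟩ := CentralExtensionsSplit.exists_comp_eq hsplit₂ hπ hcen
    (f := MonoidHom.inr G₁ G₂) fun _ _ h => congrArg Prod.snd h
  have hcomm (a : G₁) (b : G₂) : Commute (t₁ a) (t₂ b) := by
    refine t₁.commute_of_commutatorElement_mem_center hperf₁ (fun a => hcen ?_) a
    rw [MonoidHom.mem_ker, map_commutatorElement, ← MonoidHom.comp_apply, ← MonoidHom.comp_apply,
      ht₁, ht₂, commutatorElement_eq_one_iff_commute]
    exact MonoidHom.commute_inl_inr a b
  refine ⟨t₁.noncommCoprod t₂ hcomm, MonoidHom.ext fun p => ?_⟩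
  simp [← MonoidHom.comp_apply, ht₁, ht₂]

/-- If `G₁` and `G₂` are perfect groups all of whose central extensions split,
then every central extension of `G₁ × G₂` splits. -/
theorem stmt_0 {G₁ G₂ : Type} [Group G₁] [Group G₂]
    (hperf₁ : commutator G₁ = ⊤) (hperf₂ : commutator G₂ = ⊤)
    (hsplit₁ : ∀ (E : Type) [Group E] (π : E →* G₁), Function.Surjective π →
      π.ker ≤ Subgroup.center E → ∃ s : G₁ →* E, π.comp s = MonoidHom.id G₁)
    (hsplit₂ : ∀ (E : Type) [Group E] (π : E →* G₂), Function.Surjective π →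
      π.ker ≤ Subgroup.center E → ∃ s : G₂ →* E, π.comp s = MonoidHom.id G₂) :
    ∀ (E : Type) [Group E] (π : E →* (G₁ × G₂)), Function.Surjective π →
      π.ker ≤ Subgroup.center E →
      ∃ s : (G₁ × G₂) →* E, π.comp s = MonoidHom.id (G₁ × G₂) :=
  stmt_0_general hperf₁ hsplit₁ hsplit₂
end

section
/- Let S be a commutative ring and c : Sˣ × Sˣ → A a map into an abelian group satisfying: (a) c(x,y) + c(xy,z) = c(x,yz) + c(y,z), (b) c(1,1) = 0, (c) c(x,y) = c(x⁻¹,y⁻¹), and (d) c(x,y) = c(x,-xy), for all units x,y,z. Then c(x,y) = c(y⁻¹,x) for all x,y ∈ Sˣ. -/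
/-- If `c : Sˣ × Sˣ → A` satisfies the Steinberg symbol relations
(a) `c(x,y) + c(xy,z) = c(x,yz) + c(y,z)`, (b) `c(1,1) = 0`,
(c) `c(x,y) = c(x⁻¹,y⁻¹)`, (d) `c(x,y) = c(x,-xy)`, then `c(x,y) = c(y⁻¹,x)`. -/
theorem stmt_5 {S A : Type} [CommRing S] [AddCommGroup A]
    (c : Sˣ → Sˣ → A)
    (ha : ∀ x y z : Sˣ, c x y + c (x * y) z = c x (y * z) + c y z)
    (hb : c 1 1 = 0)
    (hc : ∀ x y : Sˣ, c x y = c x⁻¹ y⁻¹)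
    (hd : ∀ x y : Sˣ, c x y = c x (-(x * y))) :
    ∀ x y : Sˣ, c x y = c y⁻¹ x := by
  -- c x 1 = 0
  have h1 : ∀ x : Sˣ, c x 1 = 0 := by
    intro x
    have h := ha x 1 1
    simp only [mul_one, one_mul, hb] at h
    exact add_left_cancel h
  -- c a (-(a⁻¹ * b)) = c a b
  have hd' : ∀ a b : Sˣ, c a (-(a⁻¹ * b)) = c a b := by
    intro a b
    have h := hd a (-(a⁻¹ * b))
    have e : -(a * -(a⁻¹ * b)) = b := by
      rw [mul_neg, neg_neg, ← mul_assoc, mul_inv_cancel, one_mul]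
    rw [e] at h
    exact h
  intro x y
  have H := ha x y (-(x * y)⁻¹)
  have e1 : (-(x * y)⁻¹ : Sˣ) = -((x * y)⁻¹ * 1) := by rw [mul_one]
  have e2 : c (x * y) (-(x * y)⁻¹) = 0 := by rw [e1, hd' (x * y) 1, h1]
  have e3 : (y * -(x * y)⁻¹ : Sˣ) = -(x⁻¹ * 1) := by
    rw [mul_one, mul_neg, mul_inv_rev, ← mul_assoc, mul_inv_cancel, one_mul]
  have e4 : c x (y * -(x * y)⁻¹) = 0 := by rw [e3, hd' x 1, h1]
  have e5 : (-(x * y)⁻¹ : Sˣ) = -(y⁻¹ * x⁻¹) := by rw [mul_inv_rev, mul_comm]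
  have e6 : c y (-(x * y)⁻¹) = c y x⁻¹ := by rw [e5, hd' y x⁻¹]
  rw [e2, e4, e6, add_zero, zero_add] at H
  rw [H, hc y x⁻¹, inv_inv]
end

section
/- Let k be a commutative ring, R a localization of a quotient of the polynomial ring k[X], and K a field. Then for every ring homomorphism g : R → K, the K-vector space Der_k^g(R, K) of k-linear derivations of R into K with respect to g has dimension at most 1. -/
/-!
A `g`-derivation `δ` of `R = S⁻¹(k[X]/I)` that vanishes on `k` is determined by its value at the
image `t` of `X`: by the Leibniz rule it vanishes on the image of `k[X]` as soon as `δ t = 0`, and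
then on all of `R`, since `δ (a / s) * g s = δ a - g (a / s) * δ s` with `g s` a unit. Hence
`δ ↦ δ t` is an injective `K`-linear map to `K`, and `δ₂ t • δ₁ - δ₁ t • δ₂` must vanish.
-/

open Polynomial

section TwistedDerivation

variable {R K : Type*} [CommRing R] [CommRing K]

theorem Polynomial.leibniz_apply_eq_zero {k : Type*} [CommRing k] (φ : k[X] →+* R)
    (g : R →+* K) (δ : R → K) (hadd : ∀ a b, δ (a + b) = δ a + δ b)
    (hleib : ∀ a b, δ (a * b) = δ a * g b + g a * δ b)
    (hC : ∀ c, δ (φ (C c)) = 0) (hX : δ (φ X) = 0) (p : k[X]) : δ (φ p) = 0 := by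
  induction p using Polynomial.induction_on with
  | C c => exact hC c
  | add p q hp hq => rw [map_add, hadd, hp, hq, add_zero]
  | monomial n c ih => rw [pow_succ, ← mul_assoc, map_mul, hleib, ih, hX, zero_mul, mul_zero,
      add_zero]

theorem IsLocalization.leibniz_eq_zero {A : Type*} [CommRing A] [Algebra A R] (M : Submonoid A)
    [IsLocalization M R] (g : R →+* K) (δ : R → K)
    (hleib : ∀ a b, δ (a * b) = δ a * g b + g a * δ b)
    (hA : ∀ a, δ (algebraMap A R a) = 0) (r : R) : δ r = 0 := by
  obtain ⟨⟨a, s⟩, rfl⟩ := IsLocalization.mk'_surjective M r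
  have h := hleib (IsLocalization.mk' R a s) (algebraMap A R s)
  rw [IsLocalization.mk'_spec, hA, hA, mul_zero, add_zero] at h
  exact ((IsLocalization.map_units R s).map g).mul_left_eq_zero.mp h.symm

end TwistedDerivation

theorem Localization.quotient_polynomial_leibniz_eq_zero {k K : Type*} [CommRing k] [CommRing K]
    {I : Ideal k[X]} (S : Submonoid (k[X] ⧸ I)) (g : Localization S →+* K)
    (δ : Localization S → K) (hadd : ∀ a b, δ (a + b) = δ a + δ b)
    (hleib : ∀ a b, δ (a * b) = δ a * g b + g a * δ b)
    (hC : ∀ c, δ (algebraMap (k[X] ⧸ I) (Localization S) (Ideal.Quotient.mk I (C c))) = 0)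
    (hX : δ (algebraMap (k[X] ⧸ I) (Localization S) (Ideal.Quotient.mk I X)) = 0)
    (r : Localization S) : δ r = 0 := by
  refine IsLocalization.leibniz_eq_zero S g δ hleib (fun q => ?_) r
  obtain ⟨p, rfl⟩ := Ideal.Quotient.mk_surjective q
  exact Polynomial.leibniz_apply_eq_zero ((algebraMap _ _).comp (Ideal.Quotient.mk I)) g δ
    hadd hleib hC hX p

/-- Let `k` be a commutative ring and `R = S⁻¹(k[X]/I)` a localization of a quotient
of `k[X]`. Then for every field `K` and ring homomorphism `g : R →+* K`, the space
of `k`-linear derivations of `R` into `K` with respect to `g` has dimension at most 1: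
any two such derivations are `K`-linearly dependent. -/
theorem stmt_11 {k K : Type} [CommRing k] [Field K]
    (I : Ideal (Polynomial k)) (S : Submonoid ((Polynomial k) ⧸ I))
    (g : Localization S →+* K)
    (δ₁ δ₂ : Localization S → K)
    (hadd₁ : ∀ a b, δ₁ (a + b) = δ₁ a + δ₁ b)
    (hleib₁ : ∀ a b, δ₁ (a * b) = δ₁ a * g b + g a * δ₁ b)
    (hk₁ : ∀ c : k, δ₁ (algebraMap ((Polynomial k) ⧸ I) (Localization S)
      (Ideal.Quotient.mk I (Polynomial.C c))) = 0)
    (hadd₂ : ∀ a b, δ₂ (a + b) = δ₂ a + δ₂ b)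
    (hleib₂ : ∀ a b, δ₂ (a * b) = δ₂ a * g b + g a * δ₂ b)
    (hk₂ : ∀ c : k, δ₂ (algebraMap ((Polynomial k) ⧸ I) (Localization S)
      (Ideal.Quotient.mk I (Polynomial.C c))) = 0) :
    ∃ c₁ c₂ : K, ¬(c₁ = 0 ∧ c₂ = 0) ∧ ∀ r, c₁ * δ₁ r + c₂ * δ₂ r = 0 := by
  set t := algebraMap (k[X] ⧸ I) (Localization S) (Ideal.Quotient.mk I X)
  by_cases h : δ₁ t = 0
  · refine ⟨1, 0, by simp, fun r => ?_⟩
    simp [Localization.quotient_polynomial_leibniz_eq_zero S g δ₁ hadd₁ hleib₁ hk₁ h r]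
  · refine ⟨δ₂ t, -δ₁ t, fun hc => h (neg_eq_zero.mp hc.2), fun r => ?_⟩
    have hδ := Localization.quotient_polynomial_leibniz_eq_zero S g
      (fun x => δ₂ t * δ₁ x - δ₁ t * δ₂ x)
      (fun a b => by simp only [hadd₁, hadd₂]; ring)
      (fun a b => by simp only [hleib₁, hleib₂]; ring)
      (fun c => by simp only [hk₁, hk₂]; ring)
      (by ring) r
    linear_combination hδ
end

section
/- Let K be an algebraically closed field of characteristic 0 and B a finite-dimensional commutative K-algebra such that for every ring homomorphism g from B to K and every maximal ideal m of B, dim_K(m/m²) ≤ 1. Then B is isomorphic as a K-algebra to a finite product of truncated polynomial rings K[X]/(X^{d_i}) with d_i ≥ 1. -/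
/-!
Being finite-dimensional, `B` is Artinian, so its nilradical is nilpotent and the Chinese
remainder theorem splits `B` into the local factors `B ⧸ mⁿ`. In such a factor the maximal ideal
`M` is nilpotent and `M ≤ (t) + M²`; iterating gives `M = (t)`. As the residue field is `K`, every
element is then a polynomial in `t` (approximate modulo `tᵏ` for increasing `k`), and the kernel of
`K[X] → B ⧸ mⁿ` is a principal ideal containing `Xⁿ`, hence equal to `(X ^ d)`.
-/

open Polynomial

theorem Ideal.le_span_singleton_of_le_sup_sq {A : Type*} [CommRing A] {M : Ideal A} {τ : A}
    {n : ℕ} (hM : M ≤ span {τ} ⊔ M ^ 2) (hn : M ^ n = ⊥) : M ≤ span {τ} := by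
  have key : ∀ k : ℕ, M ≤ span {τ} ⊔ M ^ (k + 1) := by
    intro k
    induction k with
    | zero => simp
    | succ k ih =>
      refine ih.trans (sup_le le_sup_left ?_)
      calc M ^ (k + 1) = M ^ k * M := pow_succ M k
        _ ≤ M ^ k * (span {τ} ⊔ M ^ 2) := mul_mono_right hM
        _ = M ^ k * span {τ} ⊔ M ^ (k + 1 + 1) := by rw [mul_sup, ← pow_add]
        _ ≤ span {τ} ⊔ M ^ (k + 1 + 1) := sup_le_sup_right Ideal.mul_le_right _
  simpa [pow_succ, hn] using key n

theorem Ideal.le_span_singleton_sup_sq_of_forall_sub_smul_mem {R B : Type*} [CommSemiring R]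
    [CommRing B] [Algebra R B] {m : Ideal B} {t : B}
    (ht : ∀ x ∈ m, ∃ c : R, x - c • t ∈ m ^ 2) : m ≤ span {t} ⊔ m ^ 2 := by
  intro x hx
  obtain ⟨c, hc⟩ := ht x hx
  rw [← sub_add_cancel x (c • t)]
  exact add_mem (mem_sup_right hc)
    (mem_sup_left (Submodule.smul_of_tower_mem _ c (mem_span_singleton_self t)))

section

variable {K A : Type*} [Field K] [CommRing A] [Algebra K A]

theorem Polynomial.aeval_surjective_of_forall_sub_algebraMap_mem_span {τ : A} {n : ℕ}
    (hres : ∀ a : A, ∃ c : K, a - algebraMap K A c ∈ Ideal.span {τ}) (hτ : τ ^ n = 0) :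
    Function.Surjective (aeval (R := K) τ) := by
  have approx : ∀ k : ℕ, ∀ a : A, ∃ p : K[X], ∃ u : A, a = aeval τ p + τ ^ k * u := by
    intro k
    induction k with
    | zero => exact fun a => ⟨0, a, by simp⟩
    | succ k ih =>
      intro a
      obtain ⟨p, u, rfl⟩ := ih a
      obtain ⟨c, hc⟩ := hres u
      obtain ⟨v, hv⟩ := Ideal.mem_span_singleton'.mp hc
      refine ⟨p + C c * X ^ k, v, ?_⟩
      rw [map_add, map_mul, aeval_C, map_pow, aeval_X]
      linear_combination (-τ ^ k) * hv
  intro a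
  obtain ⟨p, u, rfl⟩ := approx n a
  exact ⟨p, by simp [hτ]⟩

theorem Polynomial.exists_algEquiv_quotient_X_pow_of_surjective [Nontrivial A]
    {φ : K[X] →ₐ[K] A} (hφ : Function.Surjective φ) {n : ℕ} (hn : φ X ^ n = 0) :
    ∃ d : ℕ, 1 ≤ d ∧ Nonempty ((K[X] ⧸ Ideal.span {(X : K[X]) ^ d}) ≃ₐ[K] A) := by
  obtain ⟨g, hg⟩ := (IsPrincipalIdealRing.principal (RingHom.ker φ)).principal
  rw [Ideal.submodule_span_eq] at hg
  have hXn : (X : K[X]) ^ n ∈ Ideal.span {g} := by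
    rw [← hg, RingHom.mem_ker, map_pow, hn]
  obtain ⟨d, -, hgX⟩ := (dvd_prime_pow prime_X n).mp (Ideal.mem_span_singleton.mp hXn)
  have hker : RingHom.ker φ = Ideal.span {X ^ d} := by
    rw [hg]
    exact Ideal.span_singleton_eq_span_singleton.mpr hgX
  refine ⟨d, Nat.one_le_iff_ne_zero.mpr ?_,
    ⟨(Ideal.quotientEquivAlgOfEq K hker.symm).trans (Ideal.quotientKerAlgEquivOfSurjective hφ)⟩⟩
  rintro rfl
  exact RingHom.ker_ne_top φ (by rw [hker, pow_zero, Ideal.span_singleton_one])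

end

section

variable {K B : Type*} [Field K] [IsAlgClosed K] [CommRing B] [Algebra K B] [Module.Finite K B]

theorem exists_sub_algebraMap_mem_of_isMaximal (m : Ideal B) [m.IsMaximal] (b : B) :
    ∃ c : K, b - algebraMap K B c ∈ m := by
  let _ : Field (B ⧸ m) := Ideal.Quotient.field m
  have : Algebra.IsIntegral K (B ⧸ m) := Algebra.IsIntegral.of_finite K (B ⧸ m)
  obtain ⟨c, hc⟩ :=
    (IsAlgClosed.algebraMap_bijective_of_isIntegral (k := K)).2 (Ideal.Quotient.mk m b)
  refine ⟨c, Ideal.Quotient.eq.mp ?_⟩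
  rw [← hc]
  exact ((Ideal.Quotient.mkₐ K m).commutes c).symm

theorem exists_algEquiv_quotient_pow_of_isMaximal (m : Ideal B) [m.IsMaximal] {t : B}
    (htm : t ∈ m) (ht : ∀ x ∈ m, ∃ c : K, x - c • t ∈ m ^ 2) {n : ℕ} (hn : n ≠ 0) :
    ∃ d : ℕ, 1 ≤ d ∧ Nonempty ((K[X] ⧸ Ideal.span {(X : K[X]) ^ d}) ≃ₐ[K] B ⧸ m ^ n) := by
  let π := Ideal.Quotient.mk (m ^ n)
  let M := m.map π
  have hMn : M ^ n = ⊥ := by rw [← Ideal.map_pow]; exact Ideal.map_quotient_self _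
  have hMτ : M ≤ Ideal.span {π t} := by
    refine Ideal.le_span_singleton_of_le_sup_sq ?_ hMn
    simpa [M, Ideal.map_sup, Ideal.map_span, Ideal.map_pow] using
      Ideal.map_mono (f := π) (Ideal.le_span_singleton_sup_sq_of_forall_sub_smul_mem ht)
  have hres : ∀ a : B ⧸ m ^ n, ∃ c : K, a - algebraMap K _ c ∈ Ideal.span {π t} := by
    intro a
    obtain ⟨b, rfl⟩ := Ideal.Quotient.mk_surjective a
    obtain ⟨c, hc⟩ := exists_sub_algebraMap_mem_of_isMaximal (K := K) m b
    refine ⟨c, hMτ ?_⟩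
    rw [← Ideal.Quotient.mk_algebraMap, ← map_sub]
    exact Ideal.mem_map_of_mem π hc
  have hτn : π t ^ n = 0 := by
    have := Ideal.pow_mem_pow (Ideal.mem_map_of_mem π htm) n
    rwa [hMn, Ideal.mem_bot] at this
  have : Nontrivial (B ⧸ m ^ n) := Ideal.Quotient.nontrivial_iff.mpr
    fun h => Ideal.IsMaximal.ne_top ‹_› (top_unique (h ▸ Ideal.pow_le_self hn))
  exact exists_algEquiv_quotient_X_pow_of_surjective
    (aeval_surjective_of_forall_sub_algebraMap_mem_span hres hτn) (by simpa using hτn)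

end

theorem IsArtinianRing.exists_algEquiv_pi_quotient_pow (R B : Type*) [CommSemiring R]
    [CommRing B] [Algebra R B] [IsArtinianRing B] :
    ∃ n ≠ 0, Nonempty (B ≃ₐ[R] ∀ I : MaximalSpectrum B, B ⧸ I.asIdeal ^ n) := by
  obtain ⟨n, hn⟩ := isNilpotent_nilradical (R := B)
  have hn' : nilradical B ^ (n + 1) = ⊥ := by rw [pow_succ, hn, zero_mul, Ideal.zero_eq_bot]
  exact ⟨n + 1, n.succ_ne_zero, ⟨((AlgEquiv.quotientBot R B).symm.trans
    (Ideal.quotientEquivAlgOfEq R hn'.symm)).trans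
      ((quotNilradicalPowEquivPi B (n + 1)).restrictScalars R)⟩⟩

theorem stmt_15_general {K B : Type} [Field K] [IsAlgClosed K]
    [CommRing B] [Algebra K B] [FiniteDimensional K B]
    (hcot : ∀ m : Ideal B, m.IsMaximal →
      ∃ t ∈ m, ∀ x ∈ m, ∃ c : K, x - c • t ∈ m ^ 2) :
    ∃ (r : ℕ) (d : Fin r → ℕ), (∀ i, 1 ≤ d i) ∧
      Nonempty (B ≃ₐ[K]
        (∀ i : Fin r, (Polynomial K) ⧸ Ideal.span {(X : Polynomial K) ^ (d i)})) := by
  have : IsArtinianRing B := isArtinian_of_tower K inferInstance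
  obtain ⟨n, hn, ⟨crt⟩⟩ := IsArtinianRing.exists_algEquiv_pi_quotient_pow K B
  choose t htm ht using fun I : MaximalSpectrum B => hcot I.asIdeal I.isMaximal
  choose d hd e using fun I : MaximalSpectrum B =>
    exists_algEquiv_quotient_pow_of_isMaximal I.asIdeal (htm I) (ht I) hn
  obtain ⟨r, ⟨σ⟩⟩ := Finite.exists_equiv_fin (MaximalSpectrum B)
  exact ⟨r, d ∘ σ.symm, fun _ => hd _, ⟨crt.trans <|
    (AlgEquiv.piCongrRight fun I => (e I).some).symm.trans (AlgEquiv.piCongrLeft K _ σ.symm).symm⟩⟩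

/-- Let `K` be an algebraically closed field of characteristic `0` and `B` a
finite-dimensional commutative `K`-algebra all of whose maximal ideals `m` satisfy
`dim_K m/m² ≤ 1`. Then `B` is isomorphic as a `K`-algebra to a finite product of
truncated polynomial rings `K[X]/(X^{dᵢ})` with `dᵢ ≥ 1`. -/
theorem stmt_15 {K B : Type} [Field K] [IsAlgClosed K] [CharZero K]
    [CommRing B] [Algebra K B] [FiniteDimensional K B]
    (hcot : ∀ m : Ideal B, m.IsMaximal →
      ∃ t ∈ m, ∀ x ∈ m, ∃ c : K, x - c • t ∈ m ^ 2) :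
    ∃ (r : ℕ) (d : Fin r → ℕ), (∀ i, 1 ≤ d i) ∧
      Nonempty (B ≃ₐ[K]
        (∀ i : Fin r, (Polynomial K) ⧸ Ideal.span {(X : Polynomial K) ^ (d i)})) :=
  stmt_15_general hcot
end
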